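/- arXiv:2006.06859 — 3 statements merged into one kernel-verified Lean document; each statement's English description precedes it below -/
import Mathlib

section
/- Let E/F be a finite separable field extension of degree N, and let L be a normal closure of E over F. If the Galois group Gal(L/F) is isomorphic to the symmetric group S_N, then the extension E/F has no nontrivial proper sub-extension: every intermediate field K with F ⊆ K ⊆ E satisfies K = F or K = E. -/
/-!
`Gal(L/F)` permutes the `N` embeddings `E →ₐ[F] L` by post-composition. Because `L` is generated
by their images, this action is faithful, so `Gal(L/F) ≅ S_N` makes it the full symmetric group,
which acts primitively. Hence the stabilizer of the inclusion `E → L`, which is `Gal(L/E)`, is a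
maximal subgroup, and by the Galois correspondence `E` is a minimal extension of `F` inside `L`.
-/

open IntermediateField MulAction

theorem MulAction.isPreprimitive_of_surjective_toPermHom {G X : Type*} [Group G] [MulAction G X]
    (h : Function.Surjective (toPermHom G X)) : IsPreprimitive G X :=
  (isPreprimitive_congr (φ := toPermHom G X) (f := ⟨id, fun _ _ ↦ rfl⟩) h
    Function.bijective_id).mpr inferInstance

namespace IntermediateField

variable {F L : Type*} [Field F] [Field L] [Algebra F L]

theorem fixingSubgroup_iSup {ι : Sort*} (K : ι → IntermediateField F L) :
    (⨆ i, K i).fixingSubgroup = ⨅ i, (K i).fixingSubgroup := by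
  ext σ
  simp [← Subgroup.zpowers_le, ← le_iff_le]

theorem isAtom_iff_isCoatom_fixingSubgroup [FiniteDimensional F L] [IsGalois F L]
    {K : IntermediateField F L} : IsAtom K ↔ IsCoatom K.fixingSubgroup := by
  rw [← IsGalois.intermediateFieldEquivSubgroup.isAtom_iff]
  exact isAtom_dual_iff_isCoatom (a := K.fixingSubgroup)

end IntermediateField

section Embeddings

variable {F E L : Type*} [Field F] [Field E] [Field L] [Algebra F E] [Algebra F L]

theorem AlgHom.eq_bot_or_eq_top_of_isAtom_fieldRange (ι : E →ₐ[F] L) (h : IsAtom ι.fieldRange)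
    (K : IntermediateField F E) : K = ⊥ ∨ K = ⊤ := by
  have hK : K.map ι ≤ ι.fieldRange := ι.fieldRange_eq_map ▸ map_mono ι le_top
  rcases h.le_iff.mp hK with hbot | htop
  · exact .inl (map_injective ι (hbot.trans (map_bot ι).symm))
  · exact .inr (map_injective ι (htop.trans ι.fieldRange_eq_map))

instance : MulAction Gal(L/F) (E →ₐ[F] L) where
  smul σ f := (σ : L →ₐ[F] L).comp f
  one_smul _ := rfl
  mul_smul _ _ _ := rfl

theorem AlgEquiv.smul_algHom_apply (σ : Gal(L/F)) (f : E →ₐ[F] L) (x : E) :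
    (σ • f) x = σ (f x) :=
  rfl

theorem AlgHom.stabilizer_eq_fixingSubgroup_fieldRange (ι : E →ₐ[F] L) :
    stabilizer Gal(L/F) ι = ι.fieldRange.fixingSubgroup := by
  ext σ
  simp [mem_stabilizer_iff, AlgHom.ext_iff, AlgEquiv.smul_algHom_apply]

theorem injective_toPermHom_algHom_of_normalClosure_eq_top (h : normalClosure F E L = ⊤) :
    Function.Injective (toPermHom Gal(L/F) (E →ₐ[F] L)) := by
  refine (injective_iff_map_eq_one _).mpr fun σ hσ ↦ ?_
  have hfix : σ ∈ (normalClosure F E L).fixingSubgroup := by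
    rw [normalClosure_def, fixingSubgroup_iSup, Subgroup.mem_iInf]
    intro f
    rw [← AlgHom.stabilizer_eq_fixingSubgroup_fieldRange, mem_stabilizer_iff]
    exact Equiv.ext_iff.mp hσ f
  simpa [h] using hfix

theorem AlgHom.natCard_eq_finrank_of_normal [FiniteDimensional F E] [Algebra.IsSeparable F E]
    [Normal F L] (ι : E →ₐ[F] L) : Nat.card (E →ₐ[F] L) = Module.finrank F E :=
  AlgHom.natCard_of_splits F E L fun x ↦
    minpoly.algHom_eq ι ι.injective x ▸ Normal.splits ‹_› (ι x)

theorem finiteDimensional_of_normalClosure_eq_top [FiniteDimensional F E]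
    (h : normalClosure F E L = ⊤) : FiniteDimensional F L := by
  have : FiniteDimensional F (⊤ : IntermediateField F L) := h ▸ inferInstance
  exact topEquiv.toLinearEquiv.finiteDimensional

theorem isGalois_of_normalClosure_eq_top [Algebra.IsSeparable F E] [Normal F L]
    (h : normalClosure F E L = ⊤) : IsGalois F L := by
  have : ∀ f : E →ₐ[F] L, Algebra.IsSeparable F f.fieldRange := fun f ↦
    AlgEquiv.Algebra.isSeparable (AlgEquiv.ofInjectiveField f)
  have : Algebra.IsSeparable F (normalClosure F E L) := by
    rw [normalClosure_def]
    infer_instance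
  rw [h] at this
  exact { to_isSeparable := (isSeparable_top F L).mp this }

end Embeddings

/-- Let `E/F` be a finite separable field extension of degree `N` and let `L`
be a normal closure of `E` over `F`.  If `Gal(L/F)` is isomorphic to the symmetric group `S_N`,
then `E/F` has no nontrivial proper sub-extension: every intermediate field `K` with
`F ⊆ K ⊆ E` equals `F` or `E`. -/
theorem stmt_2
    (F E L : Type) [Field F] [Field E] [Field L]
    [Algebra F E] [Algebra F L] [Algebra E L] [IsScalarTower F E L]
    (N : ℕ)
    [FiniteDimensional F E] [Algebra.IsSeparable F E]
    (hdeg : Module.finrank F E = N)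
    [Normal F L] (hclosure : IntermediateField.normalClosure F E L = ⊤)
    (hGal : Nonempty ((L ≃ₐ[F] L) ≃* Equiv.Perm (Fin N))) :
    ∀ K : IntermediateField F E, K = ⊥ ∨ K = ⊤ := by
  have := finiteDimensional_of_normalClosure_eq_top hclosure
  have := isGalois_of_normalClosure_eq_top hclosure
  let ι := IsScalarTower.toAlgHom F E L
  have hcard : Nat.card (E →ₐ[F] L) = N := (AlgHom.natCard_eq_finrank_of_normal ι).trans hdeg
  obtain hN | hN := Nat.lt_or_ge 1 N
  · have : Finite (E →ₐ[F] L) := Nat.finite_of_card_ne_zero (by omega)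
    have : Nontrivial (E →ₐ[F] L) := Finite.one_lt_card_iff_nontrivial.mp (hcard ▸ hN)
    have hcardGal : Nat.card Gal(L/F) = Nat.card (Equiv.Perm (E →ₐ[F] L)) := by
      rw [Nat.card_congr hGal.some.toEquiv, Nat.card_perm, Nat.card_perm, Nat.card_fin, hcard]
    have hsurj := ((Nat.bijective_iff_injective_and_card _).mpr
      ⟨injective_toPermHom_algHom_of_normalClosure_eq_top hclosure, hcardGal⟩).2
    have := isPreprimitive_of_surjective_toPermHom hsurj
    refine ι.eq_bot_or_eq_top_of_isAtom_fieldRange ?_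
    rw [isAtom_iff_isCoatom_fixingSubgroup, ← AlgHom.stabilizer_eq_fixingSubgroup_fieldRange]
    exact IsPreprimitive.isCoatom_stabilizer_of_isPreprimitive _ ι
  · have hrank : Module.finrank F E = 1 := by have := Module.finrank_pos (R := F) (M := E); omega
    exact fun K ↦ .inl (eq_bot_iff.mpr (bot_eq_top_iff_finrank_eq_one.mpr hrank ▸ le_top))
end

section
/- For every integer n ≥ 2 and every element a of an n-element set, the stabilizer of a in the symmetric group S_n of all permutations of that set (a subgroup isomorphic to S_{n−1}) is a maximal proper subgroup of S_n; that is, it is a coatom in the lattice of subgroups: it is not all of S_n, and any subgroup strictly containing it equals S_n. -/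
/-- For every `n ≥ 2` and every element `a` of an `n`-element set `α`, the
stabilizer of `a` in the symmetric group of all permutations of `α` is a maximal proper
subgroup (a coatom in the subgroup lattice): it is not all of `Equiv.Perm α`, and any subgroup
strictly containing it is all of `Equiv.Perm α`. -/
theorem stmt_3
    (n : ℕ) (hn : 2 ≤ n)
    (α : Type) [Fintype α] (hcard : Fintype.card α = n) (a : α) :
    IsCoatom (MulAction.stabilizer (Equiv.Perm α) a) := by
  classical
  obtain ⟨b, hb⟩ : ∃ b : α, b ≠ a :=
    Fintype.exists_ne_of_one_lt_card (by omega) a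
  constructor
  · intro h
    have hmem : Equiv.swap a b ∈ MulAction.stabilizer (Equiv.Perm α) a := h ▸ Subgroup.mem_top _
    rw [MulAction.mem_stabilizer_iff, Equiv.Perm.smul_def, Equiv.swap_apply_left] at hmem
    exact hb hmem
  · intro H hH
    -- key: any π ∈ H moving a gives swap a (π a) ∈ H
    have key : ∀ π : Equiv.Perm α, π ∈ H → π a ≠ a → Equiv.swap a (π a) ∈ H := by
      intro π hπ hπa
      have h1 : Equiv.swap a (π a) * π ∈ MulAction.stabilizer (Equiv.Perm α) a := by
        rw [MulAction.mem_stabilizer_iff]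
        simp [Equiv.Perm.smul_def, Equiv.swap_apply_right]
      have h2 : Equiv.swap a (π a) * π ∈ H := hH.le h1
      have := mul_mem h2 (inv_mem hπ)
      simpa using this
    obtain ⟨σ, hσH, hσs⟩ : ∃ σ ∈ H, σ ∉ MulAction.stabilizer (Equiv.Perm α) a := by
      obtain ⟨σ, hσ1, hσ2⟩ := SetLike.exists_of_lt hH
      exact ⟨σ, hσ1, hσ2⟩
    have hσa : σ a ≠ a := by
      rw [MulAction.mem_stabilizer_iff, Equiv.Perm.smul_def] at hσs
      exact hσs
    have stab_le : MulAction.stabilizer (Equiv.Perm α) a ≤ H := hH.le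
    -- all transpositions with a are in H
    have swaps_a : ∀ c : α, c ≠ a → Equiv.swap a c ∈ H := by
      intro c hc
      by_cases hc' : c = σ a
      · exact hc' ▸ key σ hσH hσa
      · have hτ : Equiv.swap (σ a) c ∈ MulAction.stabilizer (Equiv.Perm α) a := by
          rw [MulAction.mem_stabilizer_iff, Equiv.Perm.smul_def,
            Equiv.swap_apply_of_ne_of_ne (Ne.symm hσa) (Ne.symm hc)]
        have hπ : Equiv.swap (σ a) c * σ ∈ H := mul_mem (stab_le hτ) hσH
        have hπa : (Equiv.swap (σ a) c * σ) a = c := by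
          simp [Equiv.swap_apply_left]
        have := key _ hπ (by rw [hπa]; exact hc)
        rwa [hπa] at this
    -- hence every transposition is in H
    have swaps : ∀ x y : α, x ≠ y → Equiv.swap x y ∈ H := by
      intro x y hxy
      by_cases hx : x = a
      · exact hx ▸ swaps_a y (fun h => hxy (hx.trans h.symm))
      · by_cases hy : y = a
        · rw [Equiv.swap_comm]
          exact hy ▸ swaps_a x (fun h => hxy (h.trans hy.symm))
        · refine stab_le ?_
          rw [MulAction.mem_stabilizer_iff, Equiv.Perm.smul_def,
            Equiv.swap_apply_of_ne_of_ne (Ne.symm hx) (Ne.symm hy)]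
    rw [Subgroup.eq_top_iff']
    intro f
    refine Equiv.Perm.swap_induction_on f (one_mem H) ?_
    intro g x y hxy hg
    exact mul_mem (swaps x y hxy) hg
end

section
/- Let K be a CM field with maximal totally real subfield K₀, and let σ be the nontrivial element of Gal(K/K₀) (complex conjugation). Let p be a rational prime. For each nonzero prime ideal w of 𝒪_K above p, write w̄ for its image σ(w) under σ. Suppose given rational numbers λ_w ∈ [0,1], one for each prime w of 𝒪_K above p, satisfying λ_w + λ_{w̄} = 1 for every such w. Then there exist an integer a ≥ 1 and a nonzero element π ∈ 𝒪_K such that: (i) π·σ(π) = p^a in 𝒪_K; (ii) for every prime w of 𝒪_K above p, ord_w(π) = λ_w · ord_w(p^a) (equivalently ord_w(π)/ord_w(p^a) = λ_w); and (iii) π is a p^a-Weil number, i.e., |φ(π)| = p^{a/2} for every ring homomorphism φ : K → ℂ. -/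
/-!
Let `d` be a common denominator of the `λ_w`, so that `m_w = d λ_w` are natural numbers with
`m_w + m_w̄ = d`, and let `I = ∏_{w ∣ p} w ^ (m_w e_w)` with `e_w = ord_w p`. Since `σ` fixes
`p`, `e_w̄ = e_w`, hence `I σ(I) = (p) ^ d`. For the class number `h`, `I ^ h = (y)` is
principal, so `y σ(y) u = p ^ (d h)` for a unit `u`; this forces `σ(u) = u`, and then
`π = y² u` satisfies `π σ(π) = p ^ (2 d h)` and
`ord_w π = 2 h m_w e_w = λ_w ord_w (p ^ (2 d h))`. Finally, `σ` is complex conjugation under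
every embedding `φ`, so `|φ π|² = φ (π σ(π)) = p ^ (2 d h)`.
-/

open IsDedekindDomain NumberField

/-- The order (valuation) of a nonzero element `x` of a Dedekind domain at a height-one prime
`v`: the exponent of `v` in the factorization of the principal ideal `(x)` into primes. -/
noncomputable def ordAt {R : Type*} [CommRing R] [IsDedekindDomain R]
    (v : HeightOneSpectrum R) (x : R) : ℕ :=
  letI := Classical.decEq (Ideal R)
  Multiset.count v.asIdeal
    (UniqueFactorizationMonoid.normalizedFactors (Ideal.span {x}))

open UniqueFactorizationMonoid

theorem exists_pos_nat_mul_eq_nat {ι : Type*} (S : Finset ι) (q : ι → ℚ)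
    (hq : ∀ i ∈ S, 0 ≤ q i) :
    ∃ d : ℕ, 0 < d ∧ ∃ m : ι → ℕ, ∀ i ∈ S, (m i : ℚ) = d * q i := by
  refine ⟨∏ i ∈ S, (q i).den, Finset.prod_pos fun i _ => (q i).den_pos,
    fun i => (∏ j ∈ S, (q j).den) / (q i).den * (q i).num.toNat, fun i hi => ?_⟩
  obtain ⟨k, hk⟩ := Finset.dvd_prod_of_mem (fun j => (q j).den) hi
  simp only [hk, Nat.mul_div_cancel_left _ (q i).den_pos]
  have hnum : ((q i).num.toNat : ℚ) = (q i).num := by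
    exact_mod_cast Int.toNat_of_nonneg (Rat.num_nonneg.2 (hq i hi))
  push_cast
  rw [hnum, ← Rat.mul_den_eq_num]
  ring

theorem exists_pos_nat_mul_eq_nat_of_add_eq_one {ι : Type*} (S : Finset ι) {c : ι → ι}
    (hc : ∀ i ∈ S, c i ∈ S) {q : ι → ℚ} (hq : ∀ i ∈ S, 0 ≤ q i)
    (hqc : ∀ i ∈ S, q i + q (c i) = 1) :
    ∃ d : ℕ, 0 < d ∧ ∃ m : ι → ℕ,
      (∀ i ∈ S, (m i : ℚ) = d * q i) ∧ ∀ i ∈ S, m i + m (c i) = d := by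
  obtain ⟨d, hd, m, hm⟩ := exists_pos_nat_mul_eq_nat S q hq
  refine ⟨d, hd, m, hm, fun i hi => ?_⟩
  have hcast : ((m i + m (c i) : ℕ) : ℚ) = d := by
    rw [Nat.cast_add, hm i hi, hm _ (hc i hi), ← mul_add, hqc i hi, mul_one]
  exact_mod_cast hcast

theorem norm_eq_rpow_of_mul_eq_pow {K : Type*} [Field K] (φ : K →+* ℂ) {x y : K}
    (hy : φ y = starRingEnd ℂ (φ x)) {q a : ℕ} (h : x * y = (q : K) ^ a) :
    ‖φ x‖ = (q : ℝ) ^ ((a : ℝ) / 2) := by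
  have hsq : ‖φ x‖ ^ 2 = (q : ℝ) ^ a := by
    have := congrArg φ h
    rw [map_mul, hy, Complex.mul_conj, map_pow, map_natCast, ← Complex.sq_norm] at this
    exact_mod_cast this
  calc ‖φ x‖ = √(‖φ x‖ ^ 2) := (Real.sqrt_sq (norm_nonneg _)).symm
    _ = (q : ℝ) ^ ((a : ℝ) / 2) := by
      rw [hsq, Real.sqrt_eq_rpow, ← Real.rpow_natCast, ← Real.rpow_mul (Nat.cast_nonneg _)]
      ring_nf

theorem Ideal.isPrincipal_pow_card_classGroup {R : Type*} [CommRing R] [IsDedekindDomain R]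
    [Fintype (ClassGroup R)] {I : Ideal R} (hI : I ≠ 0) :
    (I ^ Fintype.card (ClassGroup R)).IsPrincipal := by
  have hmem := mem_nonZeroDivisors_of_ne_zero hI
  rw [← ClassGroup.mk0_eq_one_iff (pow_mem hmem _)]
  rw [← SubmonoidClass.mk_pow _ hmem, map_pow]
  exact pow_card_eq_one

theorem mul_map_eq_sq_of_mul_map_mul_eq {A : Type*} [CommRing A] [IsDomain A] {τ : A →+* A}
    (hτ : Function.Involutive τ) {y u c : A} (hy : y ≠ 0) (hc : τ c = c)
    (h : y * τ y * u = c) :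
    y ^ 2 * u * τ (y ^ 2 * u) = c ^ 2 := by
  have hτy : τ y ≠ 0 := fun h0 => hy (by rw [← hτ y, h0, map_zero])
  have hu : τ u = u := by
    have := congrArg τ h
    rw [map_mul, map_mul, hτ y, hc, ← h, mul_comm (τ y) y] at this
    exact mul_left_cancel₀ (mul_ne_zero hy hτy) this
  rw [map_mul, map_pow, hu, ← h]
  ring

section Involution

variable {R : Type*} [CommRing R] {τ : R →+* R}

theorem Ideal.comap_comap_of_involutive (hτ : Function.Involutive τ) (J : Ideal R) :
    (J.comap τ).comap τ = J := by
  ext x; simp [hτ x]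

theorem Ideal.map_eq_comap_of_involutive (hτ : Function.Involutive τ) (J : Ideal R) :
    J.map τ = J.comap τ := by
  conv_lhs => rw [← Ideal.comap_comap_of_involutive hτ J]
  exact Ideal.map_comap_of_surjective τ hτ.surjective _

end Involution

namespace IsDedekindDomain.HeightOneSpectrum

variable {R : Type*} [CommRing R]

theorem map_prod_pow {τ : R →+* R} (hτ : Function.Involutive τ)
    {S : Finset (HeightOneSpectrum R)} (hS : ∀ v ∈ S, v.comap τ hτ.surjective ∈ S)
    (f : HeightOneSpectrum R → ℕ) :
    (∏ v ∈ S, v.asIdeal ^ f v).map τ =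
      ∏ v ∈ S, v.asIdeal ^ f (v.comap τ hτ.surjective) := by
  have hcomap (v : HeightOneSpectrum R) :
      (v.comap τ hτ.surjective).comap τ hτ.surjective = v :=
    HeightOneSpectrum.ext (Ideal.comap_comap_of_involutive hτ v.asIdeal)
  rw [← Ideal.mapHom_apply, map_prod]
  simp only [Ideal.mapHom_apply, Ideal.map_pow]
  exact Finset.prod_nbij' _ _ hS hS (fun v _ => hcomap v) (fun v _ => hcomap v)
    fun v _ => by rw [hcomap, Ideal.map_eq_comap_of_involutive hτ]; rfl

theorem comap_mem_of_map_eq_self {τ : R →+* R} (hτ : Function.Involutive τ) {x : R}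
    (hτx : τ x = x) {S : Finset (HeightOneSpectrum R)} (hS : ∀ v, v ∈ S ↔ x ∈ v.asIdeal)
    {v : HeightOneSpectrum R} (hv : v ∈ S) : v.comap τ hτ.surjective ∈ S := by
  rw [hS, comap_asIdeal, Ideal.mem_comap, hτx, ← hS]
  exact hv

variable [IsDedekindDomain R]

theorem count_normalizedFactors_prod_pow [DecidableEq (Ideal R)] (S : Finset (HeightOneSpectrum R))
    (f : HeightOneSpectrum R → ℕ) {w : HeightOneSpectrum R} (hw : w ∈ S) :
    (normalizedFactors (∏ v ∈ S, v.asIdeal ^ f v)).count w.asIdeal = f w := by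
  have hprod :
      ∏ v ∈ S, v.asIdeal ^ f v = (∑ v ∈ S, Multiset.replicate (f v) v.asIdeal).prod := by
    simp [Multiset.prod_sum]
  rw [hprod, normalizedFactors_prod_of_prime, Multiset.count_sum', Finset.sum_eq_single_of_mem w hw]
  · simp
  · intro v _ hvw
    rw [Multiset.count_replicate, if_neg fun h => hvw (HeightOneSpectrum.ext h)]
  · simp only [Multiset.mem_sum, Multiset.mem_replicate]
    rintro _ ⟨v, -, -, rfl⟩
    exact v.prime

theorem ordAt_eq_of_span_eq_prod {x : R} {S : Finset (HeightOneSpectrum R)}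
    {f : HeightOneSpectrum R → ℕ} (hx : Ideal.span {x} = ∏ v ∈ S, v.asIdeal ^ f v)
    {w : HeightOneSpectrum R} (hw : w ∈ S) : ordAt w x = f w := by
  rw [ordAt, hx]
  exact count_normalizedFactors_prod_pow S f hw

theorem span_singleton_eq_prod_pow_ordAt {x : R} (hx : x ≠ 0) {S : Finset (HeightOneSpectrum R)}
    (hS : ∀ v, v ∈ S ↔ x ∈ v.asIdeal) :
    Ideal.span {x} = ∏ v ∈ S, v.asIdeal ^ ordAt v x := by
  have hx' : Ideal.span {x} ≠ 0 := by simpa using hx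
  conv_lhs => rw [← Ideal.finprod_heightOneSpectrum_factorization hx']
  rw [finprod_eq_prod_of_mulSupport_subset _ ?_]
  · exact Finset.prod_congr rfl fun v _ => v.maxPowDividing_eq_pow_multiset_count hx'
  · intro v hv
    rw [Function.mem_mulSupport, v.maxPowDividing_eq_pow_multiset_count hx'] at hv
    rw [Finset.mem_coe, hS, ← Ideal.dvd_span_singleton]
    classical
    exact dvd_of_mem_normalizedFactors (Multiset.count_ne_zero.mp fun h => hv (by rw [h, pow_zero]))

theorem ordAt_pow (v : HeightOneSpectrum R) (x : R) (n : ℕ) :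
    ordAt v (x ^ n) = n * ordAt v x := by
  simp only [ordAt, ← Ideal.span_singleton_pow, normalizedFactors_pow, Multiset.count_nsmul]

theorem finite_setOf_mem_asIdeal {x : R} (hx : x ≠ 0) :
    {v : HeightOneSpectrum R | x ∈ v.asIdeal}.Finite := by
  simpa [Ideal.dvd_span_singleton] using
    Ideal.finite_factors (I := Ideal.span {x}) (by simpa using hx)

theorem ordAt_comap_of_map_eq_self {τ : R →+* R} (hτ : Function.Involutive τ) {x : R}
    (hx : x ≠ 0) (hτx : τ x = x) {S : Finset (HeightOneSpectrum R)}
    (hS : ∀ v, v ∈ S ↔ x ∈ v.asIdeal) {v : HeightOneSpectrum R} (hv : v ∈ S) :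
    ordAt (v.comap τ hτ.surjective) x = ordAt v x := by
  have h := congrArg (Ideal.map τ) (span_singleton_eq_prod_pow_ordAt hx hS)
  rw [Ideal.map_span, Set.image_singleton, hτx,
    map_prod_pow hτ fun _ => comap_mem_of_map_eq_self hτ hτx hS] at h
  exact (ordAt_eq_of_span_eq_prod h hv).symm

theorem prod_mul_map_prod_eq_span_pow {τ : R →+* R} (hτ : Function.Involutive τ) {x : R}
    (hx : x ≠ 0) (hτx : τ x = x) {S : Finset (HeightOneSpectrum R)}
    (hS : ∀ v, v ∈ S ↔ x ∈ v.asIdeal) {d : ℕ} {m : HeightOneSpectrum R → ℕ}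
    (hm : ∀ v ∈ S, m v + m (v.comap τ hτ.surjective) = d) :
    (∏ v ∈ S, v.asIdeal ^ (m v * ordAt v x)) *
      (∏ v ∈ S, v.asIdeal ^ (m v * ordAt v x)).map τ = Ideal.span {x} ^ d := by
  rw [map_prod_pow hτ fun _ => comap_mem_of_map_eq_self hτ hτx hS, ← Finset.prod_mul_distrib,
    span_singleton_eq_prod_pow_ordAt hx hS, ← Finset.prod_pow]
  refine Finset.prod_congr rfl fun v hv => ?_
  rw [← pow_add, ← pow_mul, ordAt_comap_of_map_eq_self hτ hx hτx hS hv, ← add_mul, hm v hv,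
    mul_comm]

theorem exists_mul_map_eq_pow [Fintype (ClassGroup R)] {τ : R →+* R}
    (hτ : Function.Involutive τ) {x : R} (hx : x ≠ 0) (hτx : τ x = x)
    {S : Finset (HeightOneSpectrum R)} (hS : ∀ v, v ∈ S ↔ x ∈ v.asIdeal)
    {d : ℕ} (hd : 0 < d) {m : HeightOneSpectrum R → ℕ}
    (hm : ∀ v ∈ S, m v + m (v.comap τ hτ.surjective) = d) :
    ∃ (a : ℕ) (π : R), 0 < a ∧ π ≠ 0 ∧ π * τ π = x ^ a ∧
      ∀ v ∈ S, d * ordAt v π = m v * ordAt v (x ^ a) := by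
  set I := ∏ v ∈ S, v.asIdeal ^ (m v * ordAt v x)
  set h := Fintype.card (ClassGroup R)
  have hI : I ≠ 0 := Finset.prod_ne_zero_iff.2 fun v _ => pow_ne_zero _ v.ne_bot
  obtain ⟨y, hy⟩ := Ideal.isPrincipal_pow_card_classGroup hI
  have hy' : Ideal.span {y} = I ^ h := hy.symm
  have hy0 : y ≠ 0 := by
    rintro rfl
    exact pow_ne_zero h hI (by simpa using hy'.symm)
  obtain ⟨u, hu⟩ : Associated (y * τ y) (x ^ (d * h)) := by
    rw [← Ideal.span_singleton_eq_span_singleton, ← Ideal.span_singleton_mul_span_singleton,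
      ← Set.image_singleton, ← Ideal.map_span, hy', Ideal.map_pow, ← mul_pow,
      prod_mul_map_prod_eq_span_pow hτ hx hτx hS hm, ← pow_mul, Ideal.span_singleton_pow]
  have hspan : Ideal.span {y ^ 2 * u} = ∏ v ∈ S, v.asIdeal ^ (2 * h * (m v * ordAt v x)) := by
    rw [Ideal.span_singleton_mul_right_unit u.isUnit, ← Ideal.span_singleton_pow, hy',
      ← pow_mul, ← Finset.prod_pow]
    exact Finset.prod_congr rfl fun v _ => by rw [← pow_mul, mul_comm, mul_comm h]
  refine ⟨2 * (d * h), y ^ 2 * u, by positivity, mul_ne_zero (pow_ne_zero 2 hy0) u.ne_zero, ?_,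
    fun v hv => ?_⟩
  · rw [pow_mul', mul_map_eq_sq_of_mul_map_mul_eq hτ hy0 (by rw [map_pow, hτx]) hu]
  · rw [ordAt_eq_of_span_eq_prod hspan hv, ordAt_pow]
    ring

end IsDedekindDomain.HeightOneSpectrum

theorem stmt_5_general
    (K₀ K : Type) [Field K₀] [Field K] [NumberField K₀] [NumberField K] [Algebra K₀ K]
    (σ : K ≃ₐ[K₀] K)
    (hconj : ∀ φ : K →+* ℂ, ∀ x : K, φ (σ x) = starRingEnd ℂ (φ x))
    (p : ℕ) (hp : p.Prime)
    (lam : HeightOneSpectrum (𝓞 K) → ℚ)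
    (hlam0 : ∀ w : HeightOneSpectrum (𝓞 K), (p : 𝓞 K) ∈ w.asIdeal → 0 ≤ lam w)
    (hlamconj : ∀ w wbar : HeightOneSpectrum (𝓞 K), (p : 𝓞 K) ∈ w.asIdeal →
      Ideal.comap (RingOfIntegers.mapRingHom σ) wbar.asIdeal = w.asIdeal →
      lam w + lam wbar = 1) :
    ∃ (a : ℕ) (π : 𝓞 K), 1 ≤ a ∧ π ≠ 0 ∧
      (π : K) * σ (π : K) = (p : K) ^ a ∧
      (∀ w : HeightOneSpectrum (𝓞 K), (p : 𝓞 K) ∈ w.asIdeal →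
        (ordAt w π : ℚ) = lam w * (ordAt w ((p : 𝓞 K) ^ a) : ℚ)) ∧
      (∀ φ : K →+* ℂ, ‖φ (π : K)‖ = (p : ℝ) ^ ((a : ℝ) / 2)) := by
  obtain ⟨φ₀⟩ : Nonempty (K →+* ℂ) := by
    rw [← Fintype.card_pos_iff, NumberField.Embeddings.card K ℂ]
    exact Module.finrank_pos
  have hσ : Function.Involutive σ := fun x =>
    φ₀.injective (by rw [hconj, hconj, Complex.conj_conj])
  set τ := RingOfIntegers.mapRingHom (σ : K →+* K)
  have hτ : Function.Involutive τ := fun x => RingOfIntegers.ext (hσ x)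
  have hp0 : (p : 𝓞 K) ≠ 0 := Nat.cast_ne_zero.2 hp.ne_zero
  have hτp : τ p = p := map_natCast τ p
  set S := (HeightOneSpectrum.finite_setOf_mem_asIdeal hp0).toFinset
  have hS : ∀ v, v ∈ S ↔ (p : 𝓞 K) ∈ v.asIdeal := fun v => Set.Finite.mem_toFinset _
  obtain ⟨d, hd, m, hm, hmconj⟩ := exists_pos_nat_mul_eq_nat_of_add_eq_one S
    (fun _ => HeightOneSpectrum.comap_mem_of_map_eq_self hτ hτp hS)
    (fun v hv => hlam0 v ((hS v).1 hv)) fun v hv =>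
      hlamconj v _ ((hS v).1 hv) (Ideal.comap_comap_of_involutive hτ v.asIdeal)
  obtain ⟨a, π, ha, hπ, hmul, hord⟩ :=
    HeightOneSpectrum.exists_mul_map_eq_pow hτ hp0 hτp hS hd hmconj
  have hmulK : (π : K) * σ (π : K) = (p : K) ^ a := by
    change ((π * τ π : 𝓞 K) : K) = _
    rw [hmul]
    simp
  refine ⟨a, π, ha, hπ, hmulK, fun w hw => ?_,
    fun φ => norm_eq_rpow_of_mul_eq_pow φ (hconj φ _) hmulK⟩
  have hwS := (hS w).2 hw
  apply mul_left_cancel₀ (show (d : ℚ) ≠ 0 by positivity)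
  rw [← mul_assoc, ← hm w hwS]
  exact_mod_cast hord w hwS

/-- Let `K` be a CM field with maximal totally real subfield `K₀`, complex
conjugation `σ`, and let `p` be a rational prime.  Given rational numbers `λ_w ∈ [0,1]`, one
for each prime `w` of `𝒪_K` above `p`, with `λ_w + λ_{σ(w)} = 1`, there exist `a ≥ 1` and a
nonzero `π ∈ 𝒪_K` with `π·σ(π) = p^a`, with `ord_w(π) = λ_w · ord_w(p^a)` for every prime `w`
above `p`, and such that `π` is a `p^a`-Weil number: `|φ(π)| = p^(a/2)` for every embedding
`φ : K → ℂ`. -/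
theorem stmt_5
    (K₀ K : Type) [Field K₀] [Field K] [NumberField K₀] [NumberField K] [Algebra K₀ K]
    (hK₀real : ∀ φ : K₀ →+* ℂ, ∀ x : K₀, (φ x).im = 0)
    (hKimag : ∀ φ : K →+* ℂ, ∃ x : K, (φ x).im ≠ 0)
    (hdeg : Module.finrank K₀ K = 2)
    (σ : K ≃ₐ[K₀] K) (hσ : σ ≠ AlgEquiv.refl)
    (hconj : ∀ φ : K →+* ℂ, ∀ x : K, φ (σ x) = starRingEnd ℂ (φ x))
    (p : ℕ) (hp : p.Prime)
    (lam : HeightOneSpectrum (𝓞 K) → ℚ)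
    (hlam0 : ∀ w : HeightOneSpectrum (𝓞 K), (p : 𝓞 K) ∈ w.asIdeal → 0 ≤ lam w)
    (hlam1 : ∀ w : HeightOneSpectrum (𝓞 K), (p : 𝓞 K) ∈ w.asIdeal → lam w ≤ 1)
    (hlamconj : ∀ w wbar : HeightOneSpectrum (𝓞 K), (p : 𝓞 K) ∈ w.asIdeal →
      Ideal.comap (RingOfIntegers.mapRingHom σ) wbar.asIdeal = w.asIdeal →
      lam w + lam wbar = 1) :
    ∃ (a : ℕ) (π : 𝓞 K), 1 ≤ a ∧ π ≠ 0 ∧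
      (π : K) * σ (π : K) = (p : K) ^ a ∧
      (∀ w : HeightOneSpectrum (𝓞 K), (p : 𝓞 K) ∈ w.asIdeal →
        (ordAt w π : ℚ) = lam w * (ordAt w ((p : 𝓞 K) ^ a) : ℚ)) ∧
      (∀ φ : K →+* ℂ, ‖φ (π : K)‖ = (p : ℝ) ^ ((a : ℝ) / 2)) :=
  stmt_5_general K₀ K σ hconj p hp lam hlam0 hlamconj
end
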